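/- For every natural number n ≥ 1, define 𝓡ₙ = 1/n, Qₙ = 2/n − 1/n², 𝓜ₙ = 1/(2n³), and Mₙ = 𝓜ₙ + (Qₙ² − 𝓜ₙ²)/(2𝓡ₙ). Then Qₙ/(2𝓡ₙ) = 1 − 1/(2n) for every n, so each member of the sequence satisfies the strict inequality 2𝓡ₙ > Qₙ, the ratio Qₙ/(2𝓡ₙ) tends to 1 as n → ∞ (the inequality 2𝓡 > |Q| is saturated in the limit), and moreover Qₙ → 0, 𝓡ₙ → 0, Mₙ → 0 and 𝓜ₙ → 0 as n → ∞. -/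

import Mathlib

open Filter Topology

/-- The sequence of shell radii `𝓡ₙ = 1/n`. -/
noncomputable def shellRadius (n : ℕ) : ℝ := 1 / n

/-- The sequence of shell charges `Qₙ = 2/n − 1/n²`. -/
noncomputable def shellCharge (n : ℕ) : ℝ := 2 / n - 1 / (n : ℝ) ^ 2

/-- The sequence of shell proper masses `𝓜ₙ = 1/(2n³)`. -/
noncomputable def shellProperMass (n : ℕ) : ℝ := 1 / (2 * (n : ℝ) ^ 3)

/-- The sequence of total (ADM) masses `Mₙ = 𝓜ₙ + (Qₙ² − 𝓜ₙ²)/(2𝓡ₙ)`. -/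
noncomputable def shellMass (n : ℕ) : ℝ :=
  shellProperMass n +
    (shellCharge n ^ 2 - shellProperMass n ^ 2) / (2 * shellRadius n)

/-! Writing `x = 1/n`, the radius, charge and proper mass are the polynomials `x`, `2x - x²` and
`x³/2`, and the total mass is the polynomial `2x - 2x² + x³ - x⁵/8` (the factor `2𝓡` divides
`Q² - 𝓜²`). Since `x → 0`, every quantity tends to its value at `x = 0`, namely `0`, while the
ratio `Q/(2𝓡) = 1 - x/2` tends to `1`; the gap `2𝓡 - Q = x²` is positive for every `n ≥ 1`. -/

lemma tendsto_comp_one_div_natCast {f : ℝ → ℝ} {c : ℝ} (hf : ContinuousAt f 0) (hc : f 0 = c) :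
    Tendsto (fun n : ℕ => f (1 / n)) atTop (𝓝 c) :=
  hc ▸ hf.tendsto.comp tendsto_one_div_atTop_nhds_zero_nat

lemma shellCharge_eq (n : ℕ) : shellCharge n = 2 * (1 / n) - (1 / n : ℝ) ^ 2 := by
  simp only [shellCharge]
  ring

lemma shellProperMass_eq (n : ℕ) : shellProperMass n = (1 / n : ℝ) ^ 3 / 2 := by
  simp only [shellProperMass]
  ring

-- Also valid at `x = 0`, where both sides vanish thanks to `_ / 0 = 0`.
lemma thinShell_mass_eq_poly (x : ℝ) :
    x ^ 3 / 2 + ((2 * x - x ^ 2) ^ 2 - (x ^ 3 / 2) ^ 2) / (2 * x) =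
      2 * x - 2 * x ^ 2 + x ^ 3 - x ^ 5 / 8 := by
  rcases eq_or_ne x 0 with rfl | hx
  · simp
  · field_simp
    ring

lemma shellMass_eq (n : ℕ) :
    shellMass n = 2 * (1 / n) - 2 * (1 / n : ℝ) ^ 2 + (1 / n : ℝ) ^ 3 - (1 / n : ℝ) ^ 5 / 8 := by
  rw [shellMass, shellCharge_eq, shellProperMass_eq, shellRadius, thinShell_mass_eq_poly]

lemma shellCharge_div_two_mul_shellRadius {n : ℕ} (hn : n ≠ 0) :
    shellCharge n / (2 * shellRadius n) = 1 - 1 / (2 * (n : ℝ)) := by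
  have hn' : (n : ℝ) ≠ 0 := Nat.cast_ne_zero.mpr hn
  simp only [shellCharge, shellRadius]
  field_simp

lemma two_mul_shellRadius_sub_shellCharge (n : ℕ) :
    2 * shellRadius n - shellCharge n = (1 / n : ℝ) ^ 2 := by
  rw [shellCharge_eq, shellRadius]
  ring

lemma shellCharge_lt_two_mul_shellRadius {n : ℕ} (hn : n ≠ 0) :
    shellCharge n < 2 * shellRadius n := by
  have hgap : 0 < (1 / n : ℝ) ^ 2 := by positivity
  linarith [two_mul_shellRadius_sub_shellCharge n]

lemma tendsto_shellCharge_div_two_mul_shellRadius :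
    Tendsto (fun n : ℕ => shellCharge n / (2 * shellRadius n)) atTop (𝓝 1) := by
  have hlim : Tendsto (fun n : ℕ => 1 - (1 / n : ℝ) / 2) atTop (𝓝 1) :=
    tendsto_comp_one_div_natCast (f := fun x => 1 - x / 2) (by fun_prop) (by norm_num)
  refine hlim.congr' ?_
  filter_upwards [eventually_ne_atTop 0] with n hn
  rw [shellCharge_div_two_mul_shellRadius hn]
  ring

/-- for the sequence of thin shells with `𝓡ₙ = 1/n`,
`Qₙ = 2/n − 1/n²`, `𝓜ₙ = 1/(2n³)`, the ratio satisfies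
`Qₙ/(2𝓡ₙ) = 1 − 1/(2n)`, each member satisfies the strict inequality
`2𝓡ₙ > Qₙ`, the ratio `Qₙ/(2𝓡ₙ)` tends to `1` (the size–charge inequality
is saturated in the limit), and `Qₙ → 0`, `𝓡ₙ → 0`, `Mₙ → 0`, `𝓜ₙ → 0`. -/
theorem thin_shell_sequence_saturates_inequality :
    (∀ n : ℕ, 1 ≤ n →
      shellCharge n / (2 * shellRadius n) = 1 - 1 / (2 * (n : ℝ)) ∧
      2 * shellRadius n > shellCharge n) ∧
    Tendsto (fun n : ℕ => shellCharge n / (2 * shellRadius n)) atTop (𝓝 1) ∧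
    Tendsto shellCharge atTop (𝓝 0) ∧
    Tendsto shellRadius atTop (𝓝 0) ∧
    Tendsto shellMass atTop (𝓝 0) ∧
    Tendsto shellProperMass atTop (𝓝 0) := by
  refine ⟨fun n hn => ⟨shellCharge_div_two_mul_shellRadius (by omega),
      shellCharge_lt_two_mul_shellRadius (by omega)⟩,
    tendsto_shellCharge_div_two_mul_shellRadius, ?_, tendsto_one_div_atTop_nhds_zero_nat, ?_, ?_⟩
  · exact (tendsto_comp_one_div_natCast (f := fun x => 2 * x - x ^ 2) (by fun_prop)
      (by norm_num)).congr fun n => (shellCharge_eq n).symm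
  · exact (tendsto_comp_one_div_natCast (f := fun x => 2 * x - 2 * x ^ 2 + x ^ 3 - x ^ 5 / 8)
      (by fun_prop) (by norm_num)).congr fun n => (shellMass_eq n).symm
  · exact (tendsto_comp_one_div_natCast (f := fun x => x ^ 3 / 2) (by fun_prop)
      (by norm_num)).congr fun n => (shellProperMass_eq n).symm
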